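/- arXiv:1202.1411 — 2 statements merged into one kernel-verified Lean document; each statement's English description precedes it below -/
import Mathlib

section
/- Let V(e) = eᵀPe with α₁I ⪯ P ⪯ α₂I for some α₁, α₂ > 0, and suppose along trajectories V̇(e) ≤ (−α₃ + 2γα₂‖e‖₂)‖e‖₂² for some α₃, γ > 0. If ‖e(0)‖₂ < (α₃/(2γα₂))√(α₁/α₂), then ‖e(t)‖₂ ≤ ρ·exp(−εt/(2α₂)) for suitable ρ > 0 and ε ∈ (0, α₃), and in particular e(t) → 0 as t → ∞. -/
open Matrix

/-- Euclidean norm on `Fin n → ℝ`. -/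
noncomputable def eucNorm {n : ℕ} (v : Fin n → ℝ) : ℝ := Real.sqrt (∑ i, v i ^ 2)

/-!
The sublevel set `{V ≤ α₁ρ²}` of the Lyapunov function lies in the ball `‖e‖ ≤ ρ`, on which
`V̇ ≤ -ε‖e‖² < 0` as long as `2γα₂ρ ≤ α₃ - ε`. So a trajectory starting in it can never cross the
level `α₁ρ²`, and inside it `V̇ ≤ -(ε/α₂) V`, so that Grönwall gives `V(t) ≤ V(0) e^{-εt/α₂}`.
The smallness of `e(0)` is exactly what leaves room for an `ε ∈ (0, α₃)` with `V(0) ≤ α₁ρ²`.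
-/

open Filter Set Real

lemma eucNorm_nonneg {n : ℕ} (v : Fin n → ℝ) : 0 ≤ eucNorm v := sqrt_nonneg _

lemma norm_le_eucNorm {n : ℕ} (v : Fin n → ℝ) : ‖v‖ ≤ eucNorm v := by
  refine (pi_norm_le_iff_of_nonneg (eucNorm_nonneg v)).2 fun i => ?_
  calc ‖v i‖ = √(v i ^ 2) := (sqrt_sq_eq_abs _).symm
    _ ≤ eucNorm v :=
      sqrt_le_sqrt (Finset.single_le_sum (fun j _ => sq_nonneg (v j)) (Finset.mem_univ i))

lemma Differentiable.dotProduct_mulVec {𝕜 E m : Type*} [RCLike 𝕜] [Fintype m]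
    [NormedAddCommGroup E] [NormedSpace 𝕜 E] {f g : E → m → 𝕜}
    (hf : Differentiable 𝕜 f) (hg : Differentiable 𝕜 g) (A : Matrix m m 𝕜) :
    Differentiable 𝕜 fun x => f x ⬝ᵥ A *ᵥ g x := by
  have hfi : ∀ i, Differentiable 𝕜 fun x => f x i := differentiable_pi.mp hf
  have hgi : ∀ i, Differentiable 𝕜 fun x => g x i := differentiable_pi.mp hg
  simp only [dotProduct, mulVec]
  fun_prop

lemma le_of_deriv_neg_of_eq {V : ℝ → ℝ} {c : ℝ} (hV : Differentiable ℝ V) (h0 : V 0 ≤ c)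
    (hder : ∀ t, 0 ≤ t → V t = c → deriv V t < 0) {t : ℝ} (ht : 0 ≤ t) : V t ≤ c :=
  image_le_of_deriv_right_lt_deriv_boundary (B := fun _ => c) (B' := 0)
    hV.continuous.continuousOn (fun x _ => (hV x).hasDerivAt.hasDerivWithinAt) h0
    (fun _ => hasDerivAt_const _ _) (fun x hx => hder x hx.1) ⟨ht, le_rfl⟩

lemma le_mul_exp_of_deriv_le_mul {V : ℝ → ℝ} {K : ℝ} (hV : Differentiable ℝ V)
    (hder : ∀ t, 0 ≤ t → deriv V t ≤ K * V t) {t : ℝ} (ht : 0 ≤ t) :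
    V t ≤ V 0 * exp (K * t) := by
  have := le_gronwallBound_of_liminf_deriv_right_le (ε := 0) hV.continuous.continuousOn
    (fun x _ _ hr => (hV x).hasDerivAt.hasDerivWithinAt.liminf_right_slope_le hr) le_rfl
    (fun x hx => by simpa using hder x hx.1) t ⟨ht, le_rfl⟩
  simpa [gronwallBound_ε0] using this

lemma abs_le_mul_exp_of_lyapunov {V N : ℝ → ℝ} {α₁ α₂ ε ρ : ℝ} (hα₁ : 0 < α₁)
    (hα₂ : 0 < α₂) (hε : 0 < ε) (hρ : 0 < ρ) (hV : Differentiable ℝ V)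
    (hlow : ∀ t, α₁ * N t ^ 2 ≤ V t) (hhigh : ∀ t, V t ≤ α₂ * N t ^ 2)
    (hder : ∀ t, 0 ≤ t → N t ≤ ρ → deriv V t ≤ -ε * N t ^ 2) (h0 : V 0 ≤ α₁ * ρ ^ 2)
    {t : ℝ} (ht : 0 ≤ t) : |N t| ≤ ρ * exp (-(ε * t) / (2 * α₂)) := by
  have abs_le_of_le {s r : ℝ} (hr : 0 ≤ r) (h : V s ≤ α₁ * r ^ 2) : |N s| ≤ r :=
    abs_le_of_sq_le_sq (le_of_mul_le_mul_left ((hlow s).trans h) hα₁) hr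
  have hder_ball {s : ℝ} (hs : 0 ≤ s) (h : V s ≤ α₁ * ρ ^ 2) : deriv V s ≤ -ε * N s ^ 2 :=
    hder s hs ((le_abs_self _).trans (abs_le_of_le hρ.le h))
  have hball : ∀ s, 0 ≤ s → V s ≤ α₁ * ρ ^ 2 := fun s hs =>
    le_of_deriv_neg_of_eq hV h0 (fun r hr hVr => by
      have hN : 0 < N r ^ 2 := by nlinarith [hhigh r, mul_pos hα₁ (pow_pos hρ 2)]
      nlinarith [hder_ball hr hVr.le]) hs
  have hdecay : V t ≤ V 0 * exp (-(ε / α₂) * t) :=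
    le_mul_exp_of_deriv_le_mul hV (fun s hs => by
      have hVs : ε / α₂ * V s ≤ ε * N s ^ 2 := by
        calc ε / α₂ * V s ≤ ε / α₂ * (α₂ * N s ^ 2) := by gcongr; exact hhigh s
          _ = ε * N s ^ 2 := by field_simp
      rw [neg_mul]
      linarith [hder_ball hs (hball s hs)]) ht
  refine abs_le_of_le (by positivity) ?_
  calc V t ≤ V 0 * exp (-(ε / α₂) * t) := hdecay
    _ ≤ α₁ * ρ ^ 2 * exp (-(ε / α₂) * t) := by gcongr
    _ = α₁ * (ρ * exp (-(ε * t) / (2 * α₂))) ^ 2 := by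
      rw [mul_pow, ← exp_nat_mul]; ring_nf

lemma exists_mem_Ioo_le_div_mul {a β s x : ℝ} (hβ : 0 < β) (hs : 0 < s) (hx : 0 ≤ x)
    (h : x < a / β * s) : ∃ ε ∈ Ioo 0 a, x ≤ (a - ε) / β * s := by
  have hxa : x * β / s < a := by
    rw [div_lt_iff₀ hs]
    rw [div_mul_eq_mul_div, lt_div_iff₀ hβ] at h
    linarith
  have hx0 : 0 ≤ x * β / s := by positivity
  refine ⟨(a - x * β / s) / 2, ⟨by linarith, by linarith⟩, ?_⟩
  calc x = x * β / s / β * s := by field_simp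
    _ ≤ (a - (a - x * β / s) / 2) / β * s := by gcongr; linarith

theorem stmt9_general {n : ℕ}
    (P : Matrix (Fin n) (Fin n) ℝ)
    (α₁ α₂ α₃ γ : ℝ) (hα₁ : 0 < α₁) (hα₂ : 0 < α₂) (hγ : 0 < γ)
    (hP : ∀ v : Fin n → ℝ,
      α₁ * eucNorm v ^ 2 ≤ v ⬝ᵥ P.mulVec v ∧ v ⬝ᵥ P.mulVec v ≤ α₂ * eucNorm v ^ 2)
    (e : ℝ → Fin n → ℝ)
    (he : ∀ t : ℝ, DifferentiableAt ℝ e t)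
    (hV : ∀ t : ℝ, 0 ≤ t →
      deriv (fun s => e s ⬝ᵥ P.mulVec (e s)) t
        ≤ (-α₃ + 2 * γ * α₂ * eucNorm (e t)) * eucNorm (e t) ^ 2)
    (hinit : eucNorm (e 0) < α₃ / (2 * γ * α₂) * Real.sqrt (α₁ / α₂)) :
    (∃ ρ : ℝ, 0 < ρ ∧ ∃ ε : ℝ, ε ∈ Set.Ioo 0 α₃ ∧
        ∀ t : ℝ, 0 ≤ t → eucNorm (e t) ≤ ρ * Real.exp (-(ε * t) / (2 * α₂))) ∧
      Filter.Tendsto e Filter.atTop (nhds 0) := by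
  obtain ⟨ε, hε, hsmall⟩ := exists_mem_Ioo_le_div_mul (by positivity)
    (sqrt_pos.2 (by positivity)) (eucNorm_nonneg _) hinit
  set ρ := (α₃ - ε) / (2 * γ * α₂) with hρ_def
  have hρ : 0 < ρ := div_pos (sub_pos.2 hε.2) (by positivity)
  have hV0 : e 0 ⬝ᵥ P *ᵥ e 0 ≤ α₁ * ρ ^ 2 :=
    calc e 0 ⬝ᵥ P *ᵥ e 0 ≤ α₂ * eucNorm (e 0) ^ 2 := (hP _).2
      _ ≤ α₂ * (ρ * √(α₁ / α₂)) ^ 2 := by gcongr; exact eucNorm_nonneg _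
      _ = α₁ * ρ ^ 2 := by rw [mul_pow, sq_sqrt (by positivity)]; field_simp
  have hder (t : ℝ) (ht : 0 ≤ t) (htρ : eucNorm (e t) ≤ ρ) :
      deriv (fun s => e s ⬝ᵥ P *ᵥ e s) t ≤ -ε * eucNorm (e t) ^ 2 := by
    have hcoef : -α₃ + 2 * γ * α₂ * eucNorm (e t) ≤ -ε := by
      have : 2 * γ * α₂ * ρ = α₃ - ε := by rw [hρ_def]; field_simp
      linarith [mul_le_mul_of_nonneg_left htρ (by positivity : (0 : ℝ) ≤ 2 * γ * α₂)]
    exact (hV t ht).trans (mul_le_mul_of_nonneg_right hcoef (sq_nonneg _))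
  have hbound (t : ℝ) (ht : 0 ≤ t) : eucNorm (e t) ≤ ρ * exp (-(ε * t) / (2 * α₂)) :=
    (le_abs_self _).trans <| abs_le_mul_exp_of_lyapunov hα₁ hα₂ hε.1 hρ
      (Differentiable.dotProduct_mulVec he he P) (fun _ => (hP _).1) (fun _ => (hP _).2)
      hder hV0 ht
  refine ⟨⟨ρ, hρ, ε, hε, hbound⟩,
    squeeze_zero_norm' (a := fun t => ρ * exp (-(ε * t) / (2 * α₂))) ?_ ?_⟩
  · filter_upwards [eventually_ge_atTop 0] with t ht
    exact (norm_le_eucNorm _).trans (hbound t ht)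
  · have hexp : Tendsto (fun t => -(ε * t) / (2 * α₂)) atTop atBot :=
      (tendsto_neg_atTop_atBot.comp (tendsto_id.const_mul_atTop hε.1)).atBot_div_const
        (by positivity)
    simpa using (tendsto_exp_comp_nhds_zero.2 hexp).const_mul ρ

/-- Lyapunov decay: if `V(e) = eᵀPe` with `α₁I ⪯ P ⪯ α₂I` satisfies
`V̇ ≤ (−α₃ + 2γα₂‖e‖)‖e‖²` along the trajectory and `‖e(0)‖` is small enough, then
`‖e(t)‖ ≤ ρ e^{−εt/(2α₂)}` for some `ρ > 0` and `ε ∈ (0, α₃)`; in particular `e(t) → 0`. -/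
theorem stmt9 {n : ℕ}
    (P : Matrix (Fin n) (Fin n) ℝ) (hPsymm : P.IsSymm)
    (α₁ α₂ α₃ γ : ℝ) (hα₁ : 0 < α₁) (hα₂ : 0 < α₂) (hα₃ : 0 < α₃) (hγ : 0 < γ)
    (hP : ∀ v : Fin n → ℝ,
      α₁ * eucNorm v ^ 2 ≤ v ⬝ᵥ P.mulVec v ∧ v ⬝ᵥ P.mulVec v ≤ α₂ * eucNorm v ^ 2)
    (e : ℝ → Fin n → ℝ)
    (he : ∀ t : ℝ, DifferentiableAt ℝ e t)
    (hV : ∀ t : ℝ, 0 ≤ t →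
      deriv (fun s => e s ⬝ᵥ P.mulVec (e s)) t
        ≤ (-α₃ + 2 * γ * α₂ * eucNorm (e t)) * eucNorm (e t) ^ 2)
    (hinit : eucNorm (e 0) < α₃ / (2 * γ * α₂) * Real.sqrt (α₁ / α₂)) :
    (∃ ρ : ℝ, 0 < ρ ∧ ∃ ε : ℝ, ε ∈ Set.Ioo 0 α₃ ∧
        ∀ t : ℝ, 0 ≤ t → eucNorm (e t) ≤ ρ * Real.exp (-(ε * t) / (2 * α₂))) ∧
      Filter.Tendsto e Filter.atTop (nhds 0) :=
  stmt9_general P α₁ α₂ α₃ γ hα₁ hα₂ hγ hP e he hV hinit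
end

section
/- (Global observer convergence) Let N be linear and energy preserving, let B_r(d) be invariant for ẋ = Ax + N(x)x with x₀ ∈ B_r(d), and let Y ⊇ B_r(d). Suppose P is symmetric positive definite with eᵀP N(e)e = 0 for all e ∈ ℝⁿ, and R ∈ ℝ^{n×p} satisfies P A_y + A_yᵀ P + RC + CᵀRᵀ ≺ 0 for all y ∈ Y. Then with L := P⁻¹R, the observer ẋ̂ = Ax̂ + N(x̂)x̂ − L(Cx − Cx̂) satisfies e(t) = x(t) − x̂(t) → 0 as t → ∞ for every initial condition x̂₀ ∈ ℝⁿ. -/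
/-!
`V(e) = eᵀ P e` is a Lyapunov function for the observer error `e = x - x̂`. Along trajectories,
`eᵀ P N(e) e = 0` cancels the quadratic term of the error dynamics and `P L = R` turns the output
injection into `R C`, so `V̇` is the LMI quadratic form at `y = x(t)`, negative for `e ≠ 0` because
`x(t)` stays in the ball `⊆ Y`. On the compact set `{ε ≤ V ≤ V(e(0))} × ball` this form is at most
some `-δ < 0`, so `V(e(t))` cannot stay above `ε`; as `V` dominates `m ‖e‖²`, `e(t) → 0`.
-/

open Matrix

/-- Euclidean norm on `Fin n → ℝ`. -/
noncomputable def euclNorm {n : ℕ} (v : Fin n → ℝ) : ℝ := Real.sqrt (∑ i, v i ^ 2)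

open Filter Topology Set

theorem euclNorm_eq_norm_toLp {n : ℕ} (v : Fin n → ℝ) :
    euclNorm v = ‖(WithLp.toLp 2 v : EuclideanSpace ℝ (Fin n))‖ := by
  simp [euclNorm, EuclideanSpace.norm_eq]

theorem isCompact_setOf_euclNorm_sub_le {n : ℕ} (d : Fin n → ℝ) (r : ℝ) :
    IsCompact {v : Fin n → ℝ | euclNorm (v - d) ≤ r} := by
  have hball : {v : Fin n → ℝ | euclNorm (v - d) ≤ r} =
      (EuclideanSpace.equiv (Fin n) ℝ).symm ⁻¹' Metric.closedBall (WithLp.toLp 2 d) r := by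
    ext v
    simp [euclNorm_eq_norm_toLp, dist_eq_norm, WithLp.toLp_sub]
  rw [hball]
  exact (EuclideanSpace.equiv (Fin n) ℝ).symm.toHomeomorph.isCompact_preimage.2
    (isCompact_closedBall _ _)

theorem Matrix.exists_pos_mul_sq_norm_le_dotProduct_mulVec {ι : Type*} [Fintype ι]
    {P : Matrix ι ι ℝ} (hP : ∀ v : ι → ℝ, v ≠ 0 → 0 < v ⬝ᵥ P *ᵥ v) :
    ∃ m > 0, ∀ v : ι → ℝ, m * ‖v‖ ^ 2 ≤ v ⬝ᵥ P *ᵥ v := by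
  rcases isEmpty_or_nonempty ι with hι | hι
  · exact ⟨1, one_pos, fun v => by simp [Subsingleton.elim v 0]⟩
  obtain ⟨u, hu, hmin⟩ := (isCompact_sphere (0 : ι → ℝ) 1).exists_isMinOn
    (NormedSpace.sphere_nonempty.2 zero_le_one)
    (by fun_prop : Continuous fun v : ι → ℝ => v ⬝ᵥ P *ᵥ v).continuousOn
  refine ⟨u ⬝ᵥ P *ᵥ u, hP u (ne_zero_of_mem_unit_sphere ⟨u, hu⟩), fun v => ?_⟩
  rcases eq_or_ne v 0 with rfl | hv
  · simp
  have hnv : ‖v‖ ≠ 0 := norm_ne_zero_iff.2 hv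
  have hmin_v : u ⬝ᵥ P *ᵥ u ≤ (‖v‖⁻¹ • v) ⬝ᵥ P *ᵥ (‖v‖⁻¹ • v) :=
    hmin (show ‖v‖⁻¹ • v ∈ Metric.sphere 0 1 by simp [norm_smul, hnv])
  simp only [mulVec_smul, dotProduct_smul, smul_dotProduct, smul_eq_mul] at hmin_v
  calc u ⬝ᵥ P *ᵥ u * ‖v‖ ^ 2 ≤ ‖v‖⁻¹ * (‖v‖⁻¹ * (v ⬝ᵥ P *ᵥ v)) * ‖v‖ ^ 2 := by gcongr
    _ = v ⬝ᵥ P *ᵥ v := by field_simp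

theorem HasDerivAt.dotProduct {ι : Type*} [Fintype ι] {f g : ℝ → ι → ℝ} {f' g' : ι → ℝ} {t : ℝ}
    (hf : HasDerivAt f f' t) (hg : HasDerivAt g g' t) :
    HasDerivAt (fun s => f s ⬝ᵥ g s) (f' ⬝ᵥ g t + f t ⬝ᵥ g') t := by
  have hf := hasDerivAt_pi.1 hf
  have hg := hasDerivAt_pi.1 hg
  have := HasDerivAt.fun_sum (u := Finset.univ) fun i _ => (hf i).mul (hg i)
  rw [Finset.sum_add_distrib] at this
  exact this

theorem HasDerivAt.matrix_mulVec {ι κ : Type*} [Fintype ι] (M : Matrix κ ι ℝ) {g : ℝ → ι → ℝ}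
    {g' : ι → ℝ} {t : ℝ} (hg : HasDerivAt g g' t) :
    HasDerivAt (fun s => M *ᵥ g s) (M *ᵥ g') t :=
  hasDerivAt_pi.2 fun i => HasDerivAt.fun_sum fun j _ => (hasDerivAt_pi.1 hg j).const_mul (M i j)

theorem Matrix.IsSymm.hasDerivAt_dotProduct_mulVec {ι : Type*} [Fintype ι] {P : Matrix ι ι ℝ}
    (hP : P.IsSymm) {e : ℝ → ι → ℝ} {e' : ι → ℝ} {t : ℝ} (he : HasDerivAt e e' t) :
    HasDerivAt (fun s => e s ⬝ᵥ P *ᵥ e s) (2 * (e t ⬝ᵥ P *ᵥ e')) t := by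
  convert he.dotProduct (he.matrix_mulVec P) using 1
  rw [dotProduct_comm, dotProduct_mulVec, ← mulVec_transpose, hP.eq]
  ring

theorem tendsto_zero_of_hasDerivAt_le_neg {g g' : ℝ → ℝ} (hg : ∀ t, HasDerivAt g (g' t) t)
    (hg_nonneg : ∀ t, 0 ≤ t → 0 ≤ g t) (hg'_nonpos : ∀ t, 0 ≤ t → g' t ≤ 0)
    (hg'_neg : ∀ ε > 0, ∃ δ > 0, ∀ t, 0 ≤ t → ε ≤ g t → g t ≤ g 0 → g' t ≤ -δ) :
    Tendsto g atTop (𝓝 0) := by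
  have hcont : Continuous g := continuous_iff_continuousAt.2 fun t => (hg t).continuousAt
  have hanti : AntitoneOn g (Ici 0) :=
    antitoneOn_of_hasDerivWithinAt_nonpos (convex_Ici 0) hcont.continuousOn
      (fun t _ => (hg t).hasDerivWithinAt) (fun t ht => hg'_nonpos t (interior_subset ht))
  rw [Metric.tendsto_atTop]
  intro ε hε
  obtain ⟨T, hT, hgT⟩ : ∃ T, 0 ≤ T ∧ g T < ε := by
    by_contra! hbig
    obtain ⟨δ, hδ, hg'δ⟩ := hg'_neg ε hε
    set T := g 0 / δ + 1
    have hT : 0 ≤ T := by have := hg_nonneg 0 le_rfl; positivity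
    have hdrop : g T - g 0 ≤ -δ * (T - 0) :=
      (convex_Ici 0).image_sub_le_mul_sub_of_deriv_le hcont.continuousOn
        (fun t _ => (hg t).differentiableAt.differentiableWithinAt)
        (fun t ht => by
          have ht : 0 ≤ t := interior_subset ht
          rw [(hg t).deriv]
          exact hg'δ t ht (hbig t ht) (hanti self_mem_Ici ht ht))
        0 self_mem_Ici T hT hT
    have hδT : δ * T = g 0 + δ := by simp only [T]; field_simp
    linarith [hg_nonneg T hT]
  refine ⟨T, fun t ht => ?_⟩
  have ht0 : 0 ≤ t := hT.trans ht
  rw [Real.dist_eq, sub_zero, abs_of_nonneg (hg_nonneg t ht0)]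
  exact (hanti hT ht0 ht).trans_lt hgT

theorem norm_le_sqrt_div_of_mul_sq_le {E : Type*} [Norm E] {m c : ℝ} {v : E} (hm : 0 < m)
    (h : m * ‖v‖ ^ 2 ≤ c) : ‖v‖ ≤ √(c / m) :=
  Real.le_sqrt_of_sq_le ((le_div_iff₀' hm).2 h)

theorem tendsto_zero_of_lyapunov {E F : Type*} [NormedAddCommGroup E] [ProperSpace E]
    [TopologicalSpace F] {V : E → ℝ} {W : E → F → ℝ} {B : Set F} {m : ℝ} (hm : 0 < m)
    (hV : Continuous V) (hVm : ∀ v, m * ‖v‖ ^ 2 ≤ V v) (hW : Continuous (Function.uncurry W))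
    (hB : IsCompact B) (hW_nonpos : ∀ y ∈ B, ∀ v, W v y ≤ 0)
    (hW_neg : ∀ y ∈ B, ∀ v, 0 < V v → W v y < 0)
    {e : ℝ → E} {x : ℝ → F} (hxB : ∀ t, 0 ≤ t → x t ∈ B)
    (hVe : ∀ t, HasDerivAt (fun s => V (e s)) (W (e t) (x t)) t) :
    Tendsto e atTop (𝓝 0) := by
  have hVe_nonneg : ∀ t, 0 ≤ V (e t) := fun t => (mul_nonneg hm.le (sq_nonneg _)).trans (hVm _)
  have hVe_tendsto : Tendsto (fun t => V (e t)) atTop (𝓝 0) := by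
    refine tendsto_zero_of_hasDerivAt_le_neg hVe (fun t _ => hVe_nonneg t)
      (fun t ht => hW_nonpos _ (hxB t ht) _) fun ε hε => ?_
    set K := {v | ε ≤ V v ∧ V v ≤ V (e 0)}
    have hK : IsCompact K := Metric.isCompact_of_isClosed_isBounded
      ((isClosed_le continuous_const hV).inter (isClosed_le hV continuous_const))
      ((Metric.isBounded_closedBall (x := 0) (r := √(V (e 0) / m))).subset fun v hv => by
        simpa using norm_le_sqrt_div_of_mul_sq_le hm ((hVm v).trans hv.2))
    obtain ⟨δ, hδ, hWδ⟩ := (hK.prod hB).exists_forall_le' hW.neg.continuousOn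
      fun q hq => neg_pos.2 (hW_neg _ hq.2 _ (hε.trans_le hq.1.1))
    exact ⟨δ, hδ, fun t ht h₁ h₂ => le_neg.1 (hWδ (e t, x t) ⟨⟨h₁, h₂⟩, hxB t ht⟩)⟩
  refine squeeze_zero_norm (fun t => norm_le_sqrt_div_of_mul_sq_le hm (hVm (e t))) ?_
  simpa using (hVe_tendsto.div_const m).sqrt

section Observer

variable {ι κ : Type*} [Fintype ι] [Fintype κ] (A : Matrix ι ι ℝ) (C : Matrix κ ι ℝ)
  (N : (ι → ℝ) →ₗ[ℝ] Matrix ι ι ℝ) (P : Matrix ι ι ℝ) (R : Matrix ι κ ℝ)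

/-- `vᵀ (P A_y + A_yᵀ P + R C + Cᵀ Rᵀ) v`, where `A_y v = A v + N(v) y + N(y) v`. -/
def lmiQuadForm (v y : ι → ℝ) : ℝ :=
  2 * (v ⬝ᵥ P *ᵥ (A *ᵥ v + N v *ᵥ y + N y *ᵥ v)) + 2 * (v ⬝ᵥ R *ᵥ (C *ᵥ v))

theorem continuous_lmiQuadForm :
    Continuous (Function.uncurry (lmiQuadForm A C N P R)) := by
  have := N.continuous_of_finiteDimensional
  unfold lmiQuadForm
  fun_prop

theorem hasDerivAt_observer_error {L : Matrix ι κ ℝ} {x xh : ℝ → ι → ℝ} {t : ℝ}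
    (hx : HasDerivAt x (A *ᵥ x t + N (x t) *ᵥ x t) t)
    (hxh : HasDerivAt xh (A *ᵥ xh t + N (xh t) *ᵥ xh t - L *ᵥ (C *ᵥ x t - C *ᵥ xh t)) t) :
    HasDerivAt (fun s => x s - xh s)
      (A *ᵥ (x t - xh t) + N (x t - xh t) *ᵥ x t + N (x t) *ᵥ (x t - xh t)
        - N (x t - xh t) *ᵥ (x t - xh t) + L *ᵥ (C *ᵥ (x t - xh t))) t := by
  refine (hx.sub hxh).congr_deriv ?_
  simp only [map_sub, sub_mulVec, mulVec_sub]
  abel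

theorem hasDerivAt_lyapunov_of_error_dynamics {L : Matrix ι κ ℝ} (hP : P.IsSymm)
    (hPN : ∀ e, e ⬝ᵥ P *ᵥ (N e *ᵥ e) = 0) (hPL : P * L = R) {e : ℝ → ι → ℝ} {y : ι → ℝ}
    {t : ℝ} (he : HasDerivAt e
      (A *ᵥ e t + N (e t) *ᵥ y + N y *ᵥ e t - N (e t) *ᵥ e t + L *ᵥ (C *ᵥ e t)) t) :
    HasDerivAt (fun s => e s ⬝ᵥ P *ᵥ e s) (lmiQuadForm A C N P R (e t) y) t := by
  have hPLC : P *ᵥ (L *ᵥ (C *ᵥ e t)) = R *ᵥ (C *ᵥ e t) := by rw [mulVec_mulVec, hPL]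
  convert hP.hasDerivAt_dotProduct_mulVec he using 1
  simp only [lmiQuadForm, mulVec_add, mulVec_sub, dotProduct_add, dotProduct_sub, hPN, hPLC]
  ring

end Observer

theorem stmt14_general {n p : ℕ}
    (A : Matrix (Fin n) (Fin n) ℝ) (C : Matrix (Fin p) (Fin n) ℝ)
    (N : (Fin n → ℝ) →ₗ[ℝ] Matrix (Fin n) (Fin n) ℝ)
    (d : Fin n → ℝ) (r : ℝ) (Y : Set (Fin n → ℝ))
    (hYball : {v : Fin n → ℝ | euclNorm (v - d) ≤ r} ⊆ Y)
    (P : Matrix (Fin n) (Fin n) ℝ) (hPsymm : P.IsSymm)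
    (hPpos : ∀ v : Fin n → ℝ, v ≠ 0 → 0 < v ⬝ᵥ P.mulVec v)
    (hPN : ∀ e : Fin n → ℝ, e ⬝ᵥ P.mulVec ((N e).mulVec e) = 0)
    (R : Matrix (Fin n) (Fin p) ℝ)
    (hLMI : ∀ y ∈ Y, ∀ v : Fin n → ℝ, v ≠ 0 →
      2 * (v ⬝ᵥ P.mulVec (A.mulVec v + (N v).mulVec y + (N y).mulVec v))
        + 2 * (v ⬝ᵥ R.mulVec (C.mulVec v)) < 0)
    (L : Matrix (Fin n) (Fin p) ℝ) (hL : L = P⁻¹ * R)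
    (x xh : ℝ → Fin n → ℝ)
    (hx : ∀ t : ℝ, HasDerivAt x (A.mulVec (x t) + (N (x t)).mulVec (x t)) t)
    (hxball : ∀ t : ℝ, 0 ≤ t → euclNorm (x t - d) ≤ r)
    (hxh : ∀ t : ℝ, HasDerivAt xh
      (A.mulVec (xh t) + (N (xh t)).mulVec (xh t)
        - L.mulVec (C.mulVec (x t) - C.mulVec (xh t))) t) :
    Filter.Tendsto (fun t => x t - xh t) Filter.atTop (nhds 0) := by
  have hPdef : P.PosDef :=
    posDef_iff_dotProduct_mulVec.2
      ⟨isHermitian_iff_isSymm.2 hPsymm, fun v hv => by simpa using hPpos v hv⟩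
  have hPL : P * L = R := by
    rw [hL, mul_nonsing_inv_cancel_left P R ((isUnit_iff_isUnit_det P).1 hPdef.isUnit)]
  obtain ⟨m, hm, hPm⟩ := exists_pos_mul_sq_norm_le_dotProduct_mulVec hPpos
  refine tendsto_zero_of_lyapunov hm (by fun_prop) hPm (continuous_lmiQuadForm A C N P R)
    (isCompact_setOf_euclNorm_sub_le d r) (fun y hy v => ?_) (fun y hy v hv => ?_) hxball
    fun t => hasDerivAt_lyapunov_of_error_dynamics A C N P R hPsymm hPN hPL
      (hasDerivAt_observer_error A C N (hx t) (hxh t))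
  · rcases eq_or_ne v 0 with rfl | hv
    · simp [lmiQuadForm]
    · exact (hLMI y (hYball hy) v hv).le
  · exact hLMI y (hYball hy) v (by rintro rfl; simp at hv)

/-- Global observer convergence: if the state stays in the invariant ball
`B_r(d) ⊆ Y`, `P ≻ 0` is symmetric with `eᵀPN(e)e = 0` for all `e`, and the strict
LMI `P A_y + A_yᵀ P + RC + CᵀRᵀ ≺ 0` holds for all `y ∈ Y`, then with `L = P⁻¹R`
the observer error converges to `0` for every observer initial condition. -/
theorem stmt14 {n p : ℕ}
    (A : Matrix (Fin n) (Fin n) ℝ) (C : Matrix (Fin p) (Fin n) ℝ)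
    (N : (Fin n → ℝ) →ₗ[ℝ] Matrix (Fin n) (Fin n) ℝ)
    (hN : ∀ x : Fin n → ℝ, x ⬝ᵥ (N x).mulVec x = 0)
    (d : Fin n → ℝ) (r : ℝ) (Y : Set (Fin n → ℝ))
    (hYball : {v : Fin n → ℝ | euclNorm (v - d) ≤ r} ⊆ Y)
    (P : Matrix (Fin n) (Fin n) ℝ) (hPsymm : P.IsSymm)
    (hPpos : ∀ v : Fin n → ℝ, v ≠ 0 → 0 < v ⬝ᵥ P.mulVec v)
    (hPN : ∀ e : Fin n → ℝ, e ⬝ᵥ P.mulVec ((N e).mulVec e) = 0)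
    (R : Matrix (Fin n) (Fin p) ℝ)
    (hLMI : ∀ y ∈ Y, ∀ v : Fin n → ℝ, v ≠ 0 →
      2 * (v ⬝ᵥ P.mulVec (A.mulVec v + (N v).mulVec y + (N y).mulVec v))
        + 2 * (v ⬝ᵥ R.mulVec (C.mulVec v)) < 0)
    (L : Matrix (Fin n) (Fin p) ℝ) (hL : L = P⁻¹ * R)
    (x xh : ℝ → Fin n → ℝ)
    (hx : ∀ t : ℝ, HasDerivAt x (A.mulVec (x t) + (N (x t)).mulVec (x t)) t)
    (hxball : ∀ t : ℝ, 0 ≤ t → euclNorm (x t - d) ≤ r)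
    (hxh : ∀ t : ℝ, HasDerivAt xh
      (A.mulVec (xh t) + (N (xh t)).mulVec (xh t)
        - L.mulVec (C.mulVec (x t) - C.mulVec (xh t))) t) :
    Filter.Tendsto (fun t => x t - xh t) Filter.atTop (nhds 0) :=
  stmt14_general A C N d r Y hYball P hPsymm hPpos hPN R hLMI L hL x xh hx hxball hxh
end
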